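/- arXiv:2106.10100 — 2 statements merged into one kernel-verified Lean document; each statement's English description precedes it below -/
import Mathlib

section
/- (Join-irreducibility of generators.) Let α be a variable type, x ∈ α, and let t_1, t_2 be lattice terms over α. If ⊨_Lat x ≤ t_1 ⊔ t_2 (where x denotes the variable x viewed as a lattice term), then ⊨_Lat x ≤ t_1 or ⊨_Lat x ≤ t_2. -/
/-- Lattice terms over variable type `α`: first-order terms in the language with exactly
two binary function symbols (meet and join). -/
inductive LatTerm (α : Type) : Type
  | var : α → LatTerm α
  | meet : LatTerm α → LatTerm α → LatTerm α
  | join : LatTerm α → LatTerm α → LatTerm α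

namespace LatTerm

/-- Realization of a lattice term in a lattice `M` under a valuation `v`. -/
def realize {α M : Type} [Lattice M] (v : α → M) : LatTerm α → M
  | var a => v a
  | meet s t => realize v s ⊓ realize v t
  | join s t => realize v s ⊔ realize v t

/-- Simultaneous substitution of lattice terms for variables. -/
def subst {α β : Type} (σ : α → LatTerm β) : LatTerm α → LatTerm β
  | var a => σ a
  | meet s t => meet (subst σ s) (subst σ t)
  | join s t => join (subst σ s) (subst σ t)

end LatTerm

/-- A lattice equation: a pair of lattice terms. -/
abbrev LatEq (α : Type) : Type := LatTerm α × LatTerm α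

/-- The inequation `s ≤ t`, as the equation `s ⊓ t ≈ s`. -/
def leEq {α : Type} (s t : LatTerm α) : LatEq α := (s.meet t, s)

/-- Lat-validity: the two terms have equal realizations in every lattice under
every valuation. -/
def LatValid {α : Type} (e : LatEq α) : Prop :=
  ∀ (M : Type) [Lattice M] (v : α → M), e.1.realize v = e.2.realize v

/-- The join, with a fixed bracketing, of `f 0, …, f m`. -/
def finJoin {α : Type} : {m : ℕ} → (Fin (m + 1) → LatTerm α) → LatTerm α
  | 0, f => f 0
  | _ + 1, f => LatTerm.join (finJoin fun k => f k.castSucc) (f (Fin.last _))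

/-- The meet, with a fixed bracketing, of `f 0, …, f m`. -/
def finMeet {α : Type} : {m : ℕ} → (Fin (m + 1) → LatTerm α) → LatTerm α
  | 0, f => f 0
  | _ + 1, f => LatTerm.meet (finMeet fun k => f k.castSucc) (f (Fin.last _))

/-!
Evaluate terms in the two-element lattice `Prop` under the valuation sending `x` to `True` and
every other variable to `False`. A term `t` comes out `True` there exactly when `x ≤ t` is
Lat-valid, so validity of `x ≤ t₁ ⊔ t₂` evaluates to `t₁ ∨ t₂` in `Prop`.
-/

theorem latValid_leEq_iff {α : Type} (s t : LatTerm α) :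
    LatValid (leEq s t) ↔ ∀ (M : Type) [Lattice M] (v : α → M), s.realize v ≤ t.realize v := by
  simp only [LatValid, leEq, LatTerm.realize, inf_eq_left]

theorem LatTerm.le_realize_of_realize_eq {α : Type} (x : α) {M : Type} [Lattice M] (v : α → M) :
    ∀ t : LatTerm α, t.realize (· = x) → v x ≤ t.realize v
  | var _, rfl => le_rfl
  | meet s t, ⟨hs, ht⟩ =>
    le_inf (le_realize_of_realize_eq x v s hs) (le_realize_of_realize_eq x v t ht)
  | join s _, Or.inl hs => le_sup_of_le_left (le_realize_of_realize_eq x v s hs)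
  | join _ t, Or.inr ht => le_sup_of_le_right (le_realize_of_realize_eq x v t ht)

theorem latValid_var_le_iff {α : Type} (x : α) (t : LatTerm α) :
    LatValid (leEq (.var x) t) ↔ t.realize (· = x) := by
  rw [latValid_leEq_iff]
  exact ⟨fun h => h Prop (· = x) rfl, fun ht M _ v => t.le_realize_of_realize_eq x v ht⟩

theorem stmt8 {α : Type} (x : α) (t₁ t₂ : LatTerm α)
    (h : LatValid (leEq (.var x) (t₁.join t₂))) :
    LatValid (leEq (.var x) t₁) ∨ LatValid (leEq (.var x) t₂) := by
  rw [latValid_var_le_iff, latValid_var_le_iff]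
  exact (latValid_var_le_iff x _).mp h
end

section
/- For every n ≥ 2, no proper subset of Δ_n^{DL} := { ⊓_{i ∈ I} y_i ≤ ⊔_{j ∈ Fin n \ I} y_j : I a nonempty proper subset of Fin n } is DLat-refuting for the variables of Fin n; that is, Δ_n^{DL} is a minimal DLat-refuting set. -/
/-- DLat-validity: equal realizations in every distributive lattice under every valuation. -/
def DLatValid {α : Type} (e : LatEq α) : Prop :=
  ∀ (M : Type) [DistribLattice M] (v : α → M), e.1.realize v = e.2.realize v

/-- `Γ ⊢~_DLat Δ`. -/
def DLatAdm {n : ℕ} (Γ Δ : Set (LatEq (Fin n))) : Prop :=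
  ∀ σ : Fin n → LatTerm ℕ,
    (∀ e ∈ Γ, DLatValid (e.1.subst σ, e.2.subst σ)) →
      ∃ d ∈ Δ, DLatValid (d.1.subst σ, d.2.subst σ)

/-- `Δ` is DLat-refuting for the variables of `Fin n`. -/
def DLatRefuting {n : ℕ} (Δ : Set (LatEq (Fin n))) : Prop :=
  ∀ e : LatEq (Fin n), ¬ DLatValid e ↔ DLatAdm {e} Δ

/-- The join, with a fixed bracketing, of a nonempty list of lattice terms. -/
def joinListNE {α : Type} : (l : List (LatTerm α)) → l ≠ [] → LatTerm α
  | [], h => absurd rfl h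
  | a :: l, _ => l.foldl LatTerm.join a

/-- The meet, with a fixed bracketing, of a nonempty list of lattice terms. -/
def meetListNE {α : Type} : (l : List (LatTerm α)) → l ≠ [] → LatTerm α
  | [], h => absurd rfl h
  | a :: l, _ => l.foldl LatTerm.meet a

/-- The join, with a fixed bracketing and order, of `f i` for `i` in a nonempty finset `s`. -/
noncomputable def finsetJoin {γ α : Type} (s : Finset γ) (hs : s.Nonempty)
    (f : γ → LatTerm α) : LatTerm α :=
  joinListNE (s.toList.map f)
    (by simp only [ne_eq, List.map_eq_nil_iff, Finset.toList_eq_nil]; exact hs.ne_empty)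

/-- The meet, with a fixed bracketing and order, of `f i` for `i` in a nonempty finset `s`. -/
noncomputable def finsetMeet {γ α : Type} (s : Finset γ) (hs : s.Nonempty)
    (f : γ → LatTerm α) : LatTerm α :=
  meetListNE (s.toList.map f)
    (by simp only [ne_eq, List.map_eq_nil_iff, Finset.toList_eq_nil]; exact hs.ne_empty)

/-- The set `Δ_n^{DL}` (for `n = m + 2`) of equations
`⊓_{i ∈ I} y_i ≤ ⊔_{j ∈ Fin n \ I} y_j` for `I` a nonempty proper subset of `Fin n`
(properness being recorded by the nonemptiness of the complement of `I`). -/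
def DeltaDL (m : ℕ) : Set (LatEq (Fin (m + 2))) :=
  { e | ∃ (I : Finset (Fin (m + 2))) (hI : I.Nonempty) (_ : I ≠ Finset.univ)
          (hc : Iᶜ.Nonempty),
      e = leEq (finsetMeet I hI LatTerm.var) (finsetJoin Iᶜ hc LatTerm.var) }

/-!
If `Δ' ⊊ Δ_n^{DL}` misses `ε_I : ⊓_{i ∈ I} y_i ≤ ⊔_{j ∉ I} y_j`, then `ε_I` is refuted by the
indicator valuation of `I`, so a refuting `Δ'` would have to satisfy `{ε_I} ⊢~ Δ'`. The
substitution `y_k ↦ y_k ⊓ (w ⊔ S)` for `k ∈ I`, `y_k ↦ y_k ⊔ (w ⊓ P)` for `k ∉ I`, where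
`P = ⊓_{i ∈ I} y_i`, `S = ⊔_{j ∉ I} y_j` and `w` is fresh, makes `ε_I` DLat-valid, while for
`J ≠ I` a suitable Boolean valuation still realizes the substituted `y_k` as the indicator of
`J`, so that the substituted `ε_J` fails. Hence no member of `Δ'` becomes valid.
-/

namespace LatTerm

variable {α β : Type}

theorem realize_subst {M : Type} [Lattice M] (σ : α → LatTerm β) (v : β → M) (t : LatTerm α) :
    (t.subst σ).realize v = t.realize fun a => (σ a).realize v := by
  induction t with
  | var a => rfl
  | meet s t hs ht => simp only [subst, realize, hs, ht]
  | join s t hs ht => simp only [subst, realize, hs, ht]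

theorem subst_var (t : LatTerm α) : t.subst var = t := by
  induction t with
  | var a => rfl
  | meet s t hs ht => rw [subst, hs, ht]
  | join s t hs ht => rw [subst, hs, ht]

end LatTerm

open LatTerm

section FinsetMeetJoin

variable {α γ M : Type} [Lattice M] (v : α → M)

theorem le_realize_foldl_meet_iff (c : M) :
    ∀ (l : List (LatTerm α)) (a : LatTerm α),
      c ≤ (l.foldl meet a).realize v ↔ ∀ t ∈ a :: l, c ≤ t.realize v
  | [], a => by simp
  | b :: l, a => by
    simp only [List.foldl_cons, le_realize_foldl_meet_iff c l, List.forall_mem_cons, realize,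
      le_inf_iff, and_assoc]

theorem realize_foldl_join_le_iff (c : M) :
    ∀ (l : List (LatTerm α)) (a : LatTerm α),
      (l.foldl join a).realize v ≤ c ↔ ∀ t ∈ a :: l, t.realize v ≤ c
  | [], a => by simp
  | b :: l, a => by
    simp only [List.foldl_cons, realize_foldl_join_le_iff c l, List.forall_mem_cons, realize,
      sup_le_iff, and_assoc]

theorem le_realize_meetListNE_iff (c : M) :
    ∀ (l : List (LatTerm α)) (hl : l ≠ []),
      c ≤ (meetListNE l hl).realize v ↔ ∀ t ∈ l, c ≤ t.realize v
  | a :: l, _ => le_realize_foldl_meet_iff v c l a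

theorem realize_joinListNE_le_iff (c : M) :
    ∀ (l : List (LatTerm α)) (hl : l ≠ []),
      (joinListNE l hl).realize v ≤ c ↔ ∀ t ∈ l, t.realize v ≤ c
  | a :: l, _ => realize_foldl_join_le_iff v c l a

theorem realize_finsetMeet (s : Finset γ) (hs : s.Nonempty) (f : γ → LatTerm α) :
    (finsetMeet s hs f).realize v = s.inf' hs fun k => (f k).realize v := by
  refine eq_of_forall_le_iff fun c => ?_
  rw [finsetMeet, le_realize_meetListNE_iff, Finset.le_inf'_iff]
  simp only [List.forall_mem_map, Finset.mem_toList]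

theorem realize_finsetJoin (s : Finset γ) (hs : s.Nonempty) (f : γ → LatTerm α) :
    (finsetJoin s hs f).realize v = s.sup' hs fun k => (f k).realize v := by
  refine eq_of_forall_ge_iff fun c => ?_
  rw [finsetJoin, realize_joinListNE_le_iff, Finset.sup'_le_iff]
  simp only [List.forall_mem_map, Finset.mem_toList]

end FinsetMeetJoin

section DeltaEquations

variable {n : ℕ} (I : Finset (Fin n)) (hI : I.Nonempty) (hc : Iᶜ.Nonempty)

noncomputable def deltaEq : LatEq (Fin n) :=
  leEq (finsetMeet I hI var) (finsetJoin Iᶜ hc var)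

theorem dLatValid_subst_deltaEq_iff {β : Type} (σ : Fin n → LatTerm β) :
    DLatValid ((deltaEq I hI hc).1.subst σ, (deltaEq I hI hc).2.subst σ) ↔
      ∀ (M : Type) [DistribLattice M] (v : β → M),
        I.inf' hI (fun k => (σ k).realize v) ≤ Iᶜ.sup' hc fun k => (σ k).realize v := by
  refine forall_congr' fun M => forall_congr' fun _ => forall_congr' fun v => ?_
  simp only [deltaEq, leEq, subst, realize, realize_subst, realize_finsetMeet,
    realize_finsetJoin, inf_eq_left]

theorem not_dLatValid_subst_deltaEq {β : Type} (σ : Fin n → LatTerm β) (v : β → Bool)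
    (hv : ∀ k, (σ k).realize v = decide (k ∈ I)) :
    ¬ DLatValid ((deltaEq I hI hc).1.subst σ, (deltaEq I hI hc).2.subst σ) := by
  intro hvalid
  have hle := (dLatValid_subst_deltaEq_iff I hI hc σ).mp hvalid Bool v
  simp only [hv] at hle
  have hmeet : I.inf' hI (fun k => decide (k ∈ I)) = true :=
    top_le_iff.mp (Finset.le_inf' _ _ fun k hk => by simp [hk])
  have hjoin : Iᶜ.sup' hc (fun k => decide (k ∈ I)) = false :=
    le_bot_iff.mp (Finset.sup'_le _ _ fun k hk => by simp [Finset.mem_compl.mp hk])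
  rw [hmeet, hjoin] at hle
  exact absurd hle (by decide)

theorem not_dLatValid_deltaEq : ¬ DLatValid (deltaEq I hI hc) := by
  simpa only [subst_var] using
    not_dLatValid_subst_deltaEq I hI hc var (fun k => decide (k ∈ I)) fun _ => rfl

noncomputable def blockSubst (k : Fin n) : LatTerm ℕ :=
  if k ∈ I then (var (k : ℕ)).meet ((var n).join (finsetJoin Iᶜ hc (var ∘ Fin.val)))
  else (var (k : ℕ)).join ((var n).meet (finsetMeet I hI (var ∘ Fin.val)))

theorem realize_blockSubst {M : Type} [Lattice M] (v : ℕ → M) (k : Fin n) :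
    (blockSubst I hI hc k).realize v =
      if k ∈ I then v k ⊓ (v n ⊔ Iᶜ.sup' hc (v ∘ Fin.val))
      else v k ⊔ (v n ⊓ I.inf' hI (v ∘ Fin.val)) := by
  unfold blockSubst
  split_ifs <;> simp only [realize, realize_finsetMeet, realize_finsetJoin] <;> rfl

/-- The meet over `I` of the substituted variables is below `P ⊓ (w ⊔ S) = (w ⊓ P) ⊔ (P ⊓ S)`,
and both joinands are below each substituted `y_j` with `j ∉ I`. -/
theorem dLatValid_subst_blockSubst_deltaEq :
    DLatValid ((deltaEq I hI hc).1.subst (blockSubst I hI hc),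
      (deltaEq I hI hc).2.subst (blockSubst I hI hc)) := by
  rw [dLatValid_subst_deltaEq_iff]
  intro M _ v
  simp only [realize_blockSubst]
  set P := I.inf' hI (v ∘ Fin.val)
  set S := Iᶜ.sup' hc (v ∘ Fin.val)
  obtain ⟨i, hi⟩ := hI
  obtain ⟨j, hj⟩ := hc
  have hj' : j ∉ I := Finset.mem_compl.mp hj
  calc I.inf' _ (fun k => if k ∈ I then v k ⊓ (v n ⊔ S) else v k ⊔ (v n ⊓ P))
      ≤ P ⊓ (v n ⊔ S) := by
        refine le_inf (Finset.le_inf' _ _ fun k hk => ?_) ?_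
        · exact (Finset.inf'_le _ hk).trans (by simp [hk])
        · exact (Finset.inf'_le _ hi).trans (by simp [hi])
    _ = v n ⊓ P ⊔ P ⊓ S := by rw [inf_sup_left, inf_comm]
    _ ≤ Iᶜ.sup' _ (fun k => if k ∈ I then v k ⊓ (v n ⊔ S) else v k ⊔ (v n ⊓ P)) := by
        refine sup_le ?_ (inf_le_right.trans (Finset.sup'_le _ _ fun k hk => ?_))
        · exact le_trans (by simp [hj']) (Finset.le_sup' _ hj)
        · exact le_trans (by simp [Finset.mem_compl.mp hk]) (Finset.le_sup' _ hk)

/-- Take `y_k` to be the indicator of `J` and `w` true iff `J ⊆ I`. Then `P` is false when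
`J ⊊ I` and `S` is true otherwise, so `w` never changes the value of `y_k`. -/
theorem exists_realize_blockSubst_eq_indicator {J : Finset (Fin n)} (hJI : J ≠ I) :
    ∃ v : ℕ → Bool, ∀ k, (blockSubst I hI hc k).realize v = decide (k ∈ J) := by
  refine ⟨fun x => if hx : x < n then decide (⟨x, hx⟩ ∈ J) else decide (J ⊆ I), fun k => ?_⟩
  rw [realize_blockSubst]
  simp only [Function.comp_def, Fin.is_lt, dif_pos, Fin.eta, lt_irrefl, dif_neg, not_false_eq_true]
  by_cases hJ : J ⊆ I
  · obtain ⟨i, hiI, hiJ⟩ := Finset.not_subset.mp fun hIJ => hJI (hJ.antisymm hIJ)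
    have hP : I.inf' hI (fun k => decide (k ∈ J)) = false :=
      le_bot_iff.mp ((Finset.inf'_le _ hiI).trans (by simp [hiJ]))
    split_ifs <;> simp [hP, hJ]
  · obtain ⟨j, hjJ, hjI⟩ := Finset.not_subset.mp hJ
    have hS : Iᶜ.sup' hc (fun k => decide (k ∈ J)) = true :=
      top_le_iff.mp (le_trans (by simp [hjJ]) (Finset.le_sup' _ (Finset.mem_compl.mpr hjI)))
    split_ifs <;> simp [hS, hJ]

end DeltaEquations

theorem stmt11 (m : ℕ) (Δ' : Set (LatEq (Fin (m + 2)))) (h : Δ' ⊂ DeltaDL m) :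
    ¬ DLatRefuting Δ' := by
  intro hrefuting
  obtain ⟨_, ⟨I, hI, -, hc, rfl⟩, hI_notMem⟩ := Set.exists_of_ssubset h
  obtain ⟨_, hd, hd_valid⟩ := (hrefuting _).mp (not_dLatValid_deltaEq I hI hc)
    (blockSubst I hI hc) (by rintro _ rfl; exact dLatValid_subst_blockSubst_deltaEq I hI hc)
  obtain ⟨J, hJ, -, hJc, rfl⟩ := h.1 hd
  by_cases hJI : J = I
  · subst hJI
    exact hI_notMem hd
  · obtain ⟨v, hv⟩ := exists_realize_blockSubst_eq_indicator I hI hc hJI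
    exact not_dLatValid_subst_deltaEq J hJ hJc _ v hv hd_valid
end
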